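/- (Lemma 3.5 part 1, truncation decreases the energy.) Let n ≥ 1 and let A be a symmetric positive definite real n × n matrix with A_{mj} ≤ 0 for all m ≠ j. Let b ∈ ℝⁿ, and for each m let g_m : ℝ → ℝ be continuous with c⁻_m ≤ g_m(s) ≤ c⁺_m for all s ∈ ℝ, for given constants c⁻_m ≤ c⁺_m. Let u⁻, u⁺ ∈ ℝⁿ satisfy u⁻ ⪯ u⁺ (componentwise), Au⁺ = c⁺ + b, and Au⁻ = c⁻ + b. Define the truncation T : ℝⁿ → ℝⁿ by T(x)_m = min(u⁺_m, max(u⁻_m, x_m)), and the energy E(η) = ½ηᵀAη − Σ_{m=1}^n ∫₀^{η_m} g_m(s) ds − bᵀη. Then E(T(x)) ≤ E(x) for every x ∈ ℝⁿ. -/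

import Mathlib

open scoped BigOperators
open Matrix

/-!
Write `y = T x` and `d = x - y`. For symmetric `A`,
`E x - E y = ½ dᵀA d + ∑ₘ (dₘ ((A y)ₘ - bₘ) - ∫_{yₘ}^{xₘ} gₘ)`.
The quadratic term is nonnegative, and so is every summand: `dₘ ≠ 0` only where the truncation
is active, say `yₘ = u⁺ₘ < xₘ`; since `y ⪯ u⁺` and the off-diagonal entries of `A` are
nonpositive, `(A y)ₘ ≥ (A u⁺)ₘ = c⁺ₘ + bₘ ≥ gₘ + bₘ` on `[yₘ, xₘ]`, and symmetrically at `u⁻`.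
-/

/-- The discrete energy `E(η) = ½ ηᵀAη − ∑ m, ∫₀^{η_m} g_m(s) ds − bᵀη`. -/
noncomputable def discreteEnergy (n : ℕ) (A : Matrix (Fin n) (Fin n) ℝ)
    (b : Fin n → ℝ) (g : Fin n → ℝ → ℝ) (η : Fin n → ℝ) : ℝ :=
  (1 / 2) * (η ⬝ᵥ A.mulVec η) - (∑ m, ∫ s in (0 : ℝ)..(η m), g m s) - b ⬝ᵥ η

namespace Matrix

variable {ι R : Type*} [Fintype ι]

lemma IsSymm.dotProduct_mulVec_comm [CommSemiring R] {A : Matrix ι ι R} (hA : A.IsSymm)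
    (v w : ι → R) : v ⬝ᵥ A *ᵥ w = w ⬝ᵥ A *ᵥ v := by
  rw [dotProduct_mulVec, ← mulVec_transpose, hA.eq, dotProduct_comm]

lemma IsSymm.dotProduct_mulVec_self_sub [CommRing R] {A : Matrix ι ι R} (hA : A.IsSymm)
    (x y : ι → R) :
    x ⬝ᵥ A *ᵥ x - y ⬝ᵥ A *ᵥ y = (x - y) ⬝ᵥ A *ᵥ (x - y) + 2 * ((x - y) ⬝ᵥ A *ᵥ y) := by
  simp only [mulVec_sub, sub_dotProduct, dotProduct_sub, hA.dotProduct_mulVec_comm y x]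
  ring

lemma mulVec_apply_le_of_le_of_eq [Ring R] [PartialOrder R] [IsOrderedRing R]
    {A : Matrix ι ι R} (hA : ∀ i j, i ≠ j → A i j ≤ 0) {u v : ι → R} (hvu : ∀ j, v j ≤ u j)
    {i : ι} (hi : v i = u i) : (A *ᵥ u) i ≤ (A *ᵥ v) i := by
  refine Finset.sum_le_sum fun j _ => ?_
  rcases eq_or_ne i j with rfl | hij
  · rw [hi]
  · exact mul_le_mul_of_nonpos_left (hvu j) (hA i j hij)

end Matrix

lemma min_max_eq_left_of_lt_self {α : Type*} [LinearOrder α] {a b x : α}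
    (h : min a (max b x) < x) : min a (max b x) = a := by
  rcases min_choice a (max b x) with h' | h'
  · exact h'
  · rw [h'] at h ⊢
    exact absurd h (not_lt.mpr (le_max_right b x))

lemma min_max_eq_of_self_lt_min {α : Type*} [LinearOrder α] {a b x : α} (hba : b ≤ a)
    (h : x < min a (max b x)) : min a (max b x) = b := by
  have hmax : max b x = b := max_eq_left_iff.mpr (not_lt.mp fun hbx =>
    (h.trans_le (min_le_right a _)).ne' (max_eq_right hbx.le))
  rw [hmax, min_eq_right hba]

lemma intervalIntegral.integral_le_sub_mul {g : ℝ → ℝ} {x y p : ℝ}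
    (hg : IntervalIntegrable g MeasureTheory.volume y x)
    (hlt : y < x → ∀ s, g s ≤ p) (hgt : x < y → ∀ s, p ≤ g s) :
    ∫ s in y..x, g s ≤ (x - y) * p := by
  rcases lt_trichotomy y x with h | rfl | h
  · simpa using integral_mono_on h.le hg intervalIntegrable_const fun s _ => hlt h s
  · simp
  · have := integral_mono_on h.le intervalIntegrable_const hg.symm fun s _ => hgt h s
    rw [integral_symm]
    simp only [integral_const, smul_eq_mul] at this
    linarith

lemma discreteEnergy_sub {n : ℕ} {A : Matrix (Fin n) (Fin n) ℝ} (hA : A.IsSymm)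
    (b : Fin n → ℝ) {g : Fin n → ℝ → ℝ} (hg : ∀ m, Continuous (g m)) (x y : Fin n → ℝ) :
    discreteEnergy n A b g x - discreteEnergy n A b g y =
      1 / 2 * ((x - y) ⬝ᵥ A *ᵥ (x - y)) +
        ∑ m, ((x m - y m) * ((A *ᵥ y) m - b m) - ∫ s in y m..x m, g m s) := by
  have hint : (∑ m, ∫ s in (0 : ℝ)..x m, g m s) - ∑ m, ∫ s in (0 : ℝ)..y m, g m s =
      ∑ m, ∫ s in y m..x m, g m s := by
    rw [← Finset.sum_sub_distrib]
    exact Finset.sum_congr rfl fun m _ => intervalIntegral.integral_interval_sub_left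
      ((hg m).intervalIntegrable _ _) ((hg m).intervalIntegrable _ _)
  have hquad := hA.dotProduct_mulVec_self_sub x y
  have hlin : ∑ m, (x m - y m) * ((A *ᵥ y) m - b m) =
      (x - y) ⬝ᵥ A *ᵥ y - b ⬝ᵥ x + b ⬝ᵥ y := by
    simp only [dotProduct, Pi.sub_apply, mul_sub, Finset.sum_sub_distrib]
    simp only [sub_mul, Finset.sum_sub_distrib, mul_comm (b _)]
    ring
  rw [Finset.sum_sub_distrib, hlin, ← hint]
  unfold discreteEnergy
  linear_combination (1 / 2 : ℝ) * hquad

theorem truncation_decreases_energy_general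
    (n : ℕ) (A : Matrix (Fin n) (Fin n) ℝ) (hA : A.PosDef)
    (hoff : ∀ m j, m ≠ j → A m j ≤ 0)
    (b : Fin n → ℝ) (g : Fin n → ℝ → ℝ) (cminus cplus : Fin n → ℝ)
    (hcont : ∀ m, Continuous (g m))
    (hbounds : ∀ m (s : ℝ), cminus m ≤ g m s ∧ g m s ≤ cplus m)
    (uminus uplus : Fin n → ℝ) (hle : ∀ m, uminus m ≤ uplus m)
    (hup : A.mulVec uplus = cplus + b)
    (hum : A.mulVec uminus = cminus + b) :
    ∀ x : Fin n → ℝ,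
      discreteEnergy n A b g (fun m => min (uplus m) (max (uminus m) (x m))) ≤
        discreteEnergy n A b g x := by
  intro x
  set y : Fin n → ℝ := fun m => min (uplus m) (max (uminus m) (x m))
  rw [← sub_nonneg, discreteEnergy_sub (isHermitian_iff_isSymm.mp hA.isHermitian) b hcont]
  refine add_nonneg (mul_nonneg (by norm_num) ?_) (Finset.sum_nonneg fun m _ => ?_)
  · simpa using hA.posSemidef.dotProduct_mulVec_nonneg (x - y)
  refine sub_nonneg.mpr (intervalIntegral.integral_le_sub_mul ((hcont m).intervalIntegrable _ _)
    (fun hlt s => ?_) (fun hgt s => ?_))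
  · have hAy := mulVec_apply_le_of_le_of_eq hoff (fun j => min_le_left _ (max _ (x j)))
      (min_max_eq_left_of_lt_self hlt)
    rw [hup, Pi.add_apply] at hAy
    linarith [(hbounds m s).2]
  · have hAy := mulVec_apply_le_of_le_of_eq hoff
      (fun j => le_min (hle j) (le_max_left _ (x j)) : ∀ j, uminus j ≤ y j)
      (min_max_eq_of_self_lt_min (hle m) hgt).symm
    rw [hum, Pi.add_apply] at hAy
    linarith [(hbounds m s).1]

/-- Lemma 3.5 part 1, truncation decreases the energy: with `A`
symmetric positive definite, nonpositive off-diagonal entries, `c⁻_m ≤ g_m ≤ c⁺_m`,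
`A u⁺ = c⁺ + b`, `A u⁻ = c⁻ + b`, `u⁻ ⪯ u⁺`, the truncation
`T(x)_m = min(u⁺_m, max(u⁻_m, x_m))` satisfies `E(T(x)) ≤ E(x)` for all `x`. -/
theorem truncation_decreases_energy
    (n : ℕ) (hn : 1 ≤ n) (A : Matrix (Fin n) (Fin n) ℝ) (hA : A.PosDef)
    (hoff : ∀ m j, m ≠ j → A m j ≤ 0)
    (b : Fin n → ℝ) (g : Fin n → ℝ → ℝ) (cminus cplus : Fin n → ℝ)
    (hcont : ∀ m, Continuous (g m))
    (hbounds : ∀ m (s : ℝ), cminus m ≤ g m s ∧ g m s ≤ cplus m)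
    (hc : ∀ m, cminus m ≤ cplus m)
    (uminus uplus : Fin n → ℝ) (hle : ∀ m, uminus m ≤ uplus m)
    (hup : A.mulVec uplus = cplus + b)
    (hum : A.mulVec uminus = cminus + b) :
    ∀ x : Fin n → ℝ,
      discreteEnergy n A b g (fun m => min (uplus m) (max (uminus m) (x m))) ≤
        discreteEnergy n A b g x :=
  truncation_decreases_energy_general n A hA hoff b g cminus cplus hcont hbounds uminus uplus hle
    hup hum
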